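/- Let s ∈ (0, 1/2) with t₁(s) = 7 + 3^{3−2s} − 2^{5−2s} > 0, let h > 0, and let N ≥ 2 be an integer satisfying N ≤ 2 ( γ(s) / t₁(s) )^{1/(2s)}, where γ(s) = (1−2s)(1−s)(3−2s). Let S be the (N−1)×(N−1) matrix with entries S_{kj} = A_s h^{1−2s} t_{|k−j|}(s). Then S is strictly diagonally dominant: S_{kk} > Σ_{j≠k} |S_{kj}| for every 1 ≤ k ≤ N−1. -/

import Mathlib

/-!
With `q = 3 - 2s ∈ (2, 3)` and `F y = y ^ q`, the entry `t_p` is the fourth forward difference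
`Δ⁴F (p - 2)` for `p ≥ 2`. As `F''` is concave, `Δ⁴F ≤ 0` on `[0, ∞)`, so the off-diagonal sums
telescope: `∑_{p=1}^{m} |t_p| = t₁ + D 0 - D (m - 1)` with `D = Δ³F`, while `t₀ = 2 D 0 - 2 t₁`.
Row `k` has `a = k` entries left and `b = N - 2 - k` right of the diagonal, and it is dominant iff
`D (a - 1) + D (b - 1) > 4 t₁` (a side with no entries is handled by `3 t₁ < D 0`).
Now `Δ³F x` is an average of the convex function `F''' y = q (q - 1) (q - 2) y ^ (q - 3)`, so
Hermite–Hadamard gives `D x ≥ F''' (x + 3/2)`, and convexity of `F'''` once more turns the bound on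
`N` into the required inequality.
-/

/-- `t_p(s)`, with the convention `0^(3-2s) = 0` (automatic for `rpow`). -/
noncomputable def tFn (s : ℝ) (p : ℕ) : ℝ :=
  |(p : ℝ) - 2| ^ (3 - 2 * s) - 4 * |(p : ℝ) - 1| ^ (3 - 2 * s) + 6 * (p : ℝ) ^ (3 - 2 * s)
    - 4 * ((p : ℝ) + 1) ^ (3 - 2 * s) + ((p : ℝ) + 2) ^ (3 - 2 * s)

/-- `t₁(s) = 7 + 3^(3-2s) - 2^(5-2s)`. -/
noncomputable def t1 (s : ℝ) : ℝ := 7 + (3 : ℝ) ^ (3 - 2 * s) - (2 : ℝ) ^ (5 - 2 * s)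

/-- `A_s = 1/(2 Γ(4-2s) cos(sπ))`. -/
noncomputable def Acoef (s : ℝ) : ℝ := 1 / (2 * Real.Gamma (4 - 2 * s) * Real.cos (s * Real.pi))

open Set Real MeasureTheory
open scoped fwdDiff Interval

theorem hasDerivAt_fwdDiff_iter {𝕜 F : Type*} [NontriviallyNormedField 𝕜] [NormedAddCommGroup F]
    [NormedSpace 𝕜 F] {f f' : 𝕜 → F} (hf : ∀ x, HasDerivAt f (f' x) x) (h : 𝕜) (n : ℕ)
    (x : 𝕜) : HasDerivAt (Δ_[h] ^[n] f) (Δ_[h] ^[n] f' x) x := by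
  induction n generalizing x with
  | zero => exact hf x
  | succ n ih =>
    rw [Function.iterate_succ_apply', Function.iterate_succ_apply']
    exact ((ih (x + h)).comp_add_const x h).sub (ih x)

theorem fwdDiff_le_fwdDiff_of_deriv_le {f g f' g' : ℝ → ℝ} {a h x : ℝ} (hh : 0 ≤ h)
    (hf : ∀ y ∈ Ici a, HasDerivAt f (f' y) y) (hg : ∀ y ∈ Ici a, HasDerivAt g (g' y) y)
    (hle : ∀ y ∈ Ioi a, f' y ≤ g' y) (hx : a ≤ x) : Δ_[h] f x ≤ Δ_[h] g x := by
  have hmono : MonotoneOn (g - f) (Ici a) := by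
    refine monotoneOn_of_hasDerivWithinAt_nonneg (f' := g' - f') (convex_Ici a)
      (fun y hy ↦ ((hg y hy).sub (hf y hy)).continuousAt.continuousWithinAt) ?_ ?_ <;>
      rw [interior_Ici] <;> intro y hy
    · exact ((hg y (mem_Ici_of_Ioi hy)).sub (hf y (mem_Ici_of_Ioi hy))).hasDerivWithinAt
    · exact sub_nonneg.2 (hle y hy)
  have := hmono (mem_Ici.2 hx) (mem_Ici.2 (by linarith)) (le_add_of_nonneg_right hh)
  simp only [Pi.sub_apply] at this
  simp only [fwdDiff]
  linarith

theorem fwdDiff_iter_succ_nonpos_of_deriv {f f' : ℝ → ℝ} {a h x : ℝ} {n : ℕ} (hh : 0 ≤ h)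
    (hf : ∀ y, HasDerivAt f (f' y) y) (hf' : ∀ y ∈ Ioi a, Δ_[h] ^[n] f' y ≤ 0) (hx : a ≤ x) :
    Δ_[h] ^[n + 1] f x ≤ 0 := by
  rw [Function.iterate_succ_apply']
  simpa [fwdDiff] using fwdDiff_le_fwdDiff_of_deriv_le hh
    (fun y _ ↦ hasDerivAt_fwdDiff_iter hf h n y) (fun y _ ↦ hasDerivAt_const y 0) hf' hx

theorem fwdDiff_le_fwdDiff_iter_succ_of_deriv {f f' g g' : ℝ → ℝ} {a c x : ℝ} {n : ℕ}
    (hf : ∀ y, HasDerivAt f (f' y) y) (hg : ∀ y ∈ Ici (a + c), HasDerivAt g (g' y) y)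
    (hle : ∀ y ∈ Ioi a, g' (y + c) ≤ Δ_[1] ^[n] f' y) (hx : a ≤ x) :
    Δ_[1] g (x + c) ≤ Δ_[1] ^[n + 1] f x := by
  rw [Function.iterate_succ_apply', ← fwdDiff_comp_add]
  exact fwdDiff_le_fwdDiff_of_deriv_le zero_le_one
    (fun y hy ↦ (hg (y + c) (by simp only [mem_Ici] at hy ⊢; linarith)).comp_add_const y c)
    (fun y _ ↦ hasDerivAt_fwdDiff_iter hf 1 n y) hle hx

theorem ConcaveOn.fwdDiff_iter_two_nonpos {g : ℝ → ℝ} {a h x : ℝ} (hg : ConcaveOn ℝ (Ici a) g)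
    (hh : 0 ≤ h) (hx : a ≤ x) : Δ_[h] ^[2] g x ≤ 0 := by
  have := hg.2 (mem_Ici.2 hx) (mem_Ici.2 (by linarith : a ≤ x + 2 * h))
    (by norm_num : (0 : ℝ) ≤ 1 / 2) (by norm_num : (0 : ℝ) ≤ 1 / 2) (by norm_num)
  simp only [smul_eq_mul] at this
  rw [show 1 / 2 * x + 1 / 2 * (x + 2 * h) = x + h by ring] at this
  simp only [Function.iterate_succ, Function.iterate_zero, Function.comp_apply, id, fwdDiff]
  rw [show x + h + h = x + 2 * h by ring]
  linarith

theorem ConvexOn.map_midpoint_le_intervalAverage {g : ℝ → ℝ} {a b : ℝ} (hab : a < b)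
    (hg : ConvexOn ℝ (Icc a b) g) (hgc : ContinuousOn g (Icc a b)) :
    g ((a + b) / 2) ≤ ⨍ x in a..b, g x := by
  have hIoc : Ι a b = Ioc a b := uIoc_of_le hab.le
  have key := hg.map_set_average_le (μ := volume) (t := Ι a b) (f := id) hgc isClosed_Icc
    (by simp [hIoc, hab]) (by simp [hIoc])
    (by rw [hIoc]; exact (ae_restrict_mem measurableSet_Ioc).mono fun x hx ↦ Ioc_subset_Icc_self hx)
    (by rw [hIoc]; exact continuous_id.integrableOn_Ioc)
    (by rw [hIoc]; exact hgc.integrableOn_Icc.mono_set Ioc_subset_Icc_self)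
  have hmid : (⨍ x in Ι a b, id x) = (a + b) / 2 := by
    change (⨍ x in a..b, x) = _
    rw [interval_average_eq, integral_id, smul_eq_mul]
    field_simp [(sub_pos.2 hab).ne']
    ring
  rwa [hmid] at key

theorem convexOn_rpow_of_nonpos {p : ℝ} (hp : p ≤ 0) : ConvexOn ℝ (Ioi 0) fun x : ℝ ↦ x ^ p := by
  refine ⟨convex_Ioi 0, fun x (hx : 0 < x) y (hy : 0 < y) a b ha hb hab ↦ ?_⟩
  have hxy : 0 < a * x + b * y := by
    rcases ha.eq_or_lt with rfl | ha
    · simp_all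
    · positivity
  simp only [smul_eq_mul]
  rw [rpow_def_of_pos hxy, rpow_def_of_pos hx, rpow_def_of_pos hy]
  have hlog : a * log x + b * log y ≤ log (a * x + b * y) := by
    simpa using strictConcaveOn_log_Ioi.concaveOn.2 hx hy ha hb hab
  calc exp (log (a * x + b * y) * p) ≤ exp (a * (log x * p) + b * (log y * p)) := by
        gcongr; nlinarith
    _ ≤ a * exp (log x * p) + b * exp (log y * p) := by
        simpa using convexOn_exp.2 (mem_univ (log x * p)) (mem_univ (log y * p)) ha hb hab

theorem mul_rpow_add_half_le_fwdDiff_rpow {p z : ℝ} (hp₀ : 0 < p) (hp₁ : p ≤ 1) (hz : 0 < z) :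
    p * (z + 1 / 2) ^ (p - 1) ≤ Δ_[1] (fun x ↦ x ^ p) z := by
  have hpos : Icc z (z + 1) ⊆ Ioi 0 := fun x hx ↦ hz.trans_le hx.1
  have hconv : ConvexOn ℝ (Icc z (z + 1)) fun x : ℝ ↦ x ^ (p - 1) :=
    (convexOn_rpow_of_nonpos (by linarith)).subset hpos (convex_Icc _ _)
  have hcont : ContinuousOn (fun x : ℝ ↦ x ^ (p - 1)) (Icc z (z + 1)) := fun x hx ↦
    (continuousAt_rpow_const x _ (Or.inl (hpos hx).ne')).continuousWithinAt
  have key := hconv.map_midpoint_le_intervalAverage (by linarith) hcont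
  rw [interval_average_eq, integral_rpow (Or.inl (by linarith)), sub_add_cancel,
    add_sub_cancel_left, inv_one, one_smul, show (z + (z + 1)) / 2 = z + 1 / 2 by ring] at key
  rw [fwdDiff, ← le_div_iff₀' hp₀]
  exact key

theorem hasDerivAt_const_mul_rpow (c : ℝ) {p x : ℝ} (h : x ≠ 0 ∨ 1 ≤ p) :
    HasDerivAt (fun y ↦ c * y ^ p) (c * p * x ^ (p - 1)) x := by
  simpa only [mul_assoc] using (hasDerivAt_rpow_const h).const_mul c

section RpowDifferences

variable {q : ℝ}

theorem fwdDiff_iter_four_rpow_nonpos (hq₂ : 2 ≤ q) (hq₃ : q ≤ 3) {x : ℝ} (hx : 0 ≤ x) :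
    Δ_[1] ^[4] (fun y ↦ y ^ q) x ≤ 0 := by
  have h₀ : ∀ y : ℝ, HasDerivAt (fun y ↦ y ^ q) (q * y ^ (q - 1)) y := fun y ↦
    hasDerivAt_rpow_const (Or.inr (by linarith))
  have h₁ : ∀ y : ℝ, HasDerivAt (fun y ↦ q * y ^ (q - 1)) (q * (q - 1) * y ^ (q - 2)) y := by
    intro y
    convert hasDerivAt_const_mul_rpow q (x := y) (p := q - 1) (Or.inr (by linarith)) using 3
    ring
  have hconc : ConcaveOn ℝ (Ici 0) fun y : ℝ ↦ q * (q - 1) * y ^ (q - 2) := by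
    simpa only [smul_eq_mul] using (concaveOn_rpow (p := q - 2) (by linarith) (by linarith)).smul
      (c := q * (q - 1)) (by nlinarith)
  exact fwdDiff_iter_succ_nonpos_of_deriv zero_le_one h₀
    (fun y hy ↦ fwdDiff_iter_succ_nonpos_of_deriv zero_le_one h₁
      (fun z hz ↦ hconc.fwdDiff_iter_two_nonpos zero_le_one (mem_Ioi.1 hz).le) (mem_Ioi.1 hy).le) hx

theorem mul_rpow_le_fwdDiff_iter_three_rpow (hq₂ : 2 < q) (hq₃ : q ≤ 3) {x : ℝ} (hx : 0 ≤ x) :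
    q * (q - 1) * (q - 2) * (x + 3 / 2) ^ (q - 3) ≤ Δ_[1] ^[3] (fun y ↦ y ^ q) x := by
  set c := q * (q - 1)
  have hc : 0 ≤ c := mul_nonneg (by linarith) (by linarith)
  have h₀ : ∀ y : ℝ, HasDerivAt (fun y ↦ y ^ q) (q * y ^ (q - 1)) y := fun y ↦
    hasDerivAt_rpow_const (Or.inr (by linarith))
  have h₁ : ∀ y : ℝ, HasDerivAt (fun y ↦ q * y ^ (q - 1)) (c * y ^ (q - 2)) y := by
    intro y
    convert hasDerivAt_const_mul_rpow q (x := y) (p := q - 1) (Or.inr (by linarith)) using 3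
    ring
  have h₂ : ∀ y ∈ Ioi (0 : ℝ),
      HasDerivAt (fun y ↦ c * y ^ (q - 2)) (c * (q - 2) * y ^ (q - 3)) y := by
    intro y hy
    convert hasDerivAt_const_mul_rpow c (x := y) (p := q - 2) (Or.inl (ne_of_gt hy)) using 3
    ring
  have hmid : ∀ z ∈ Ioi (0 : ℝ),
      c * (q - 2) * (z + 1 / 2) ^ (q - 3) ≤ Δ_[1] (fun y ↦ c * y ^ (q - 2)) z := by
    intro z hz
    have := mul_rpow_add_half_le_fwdDiff_rpow (p := q - 2) (by linarith) (by linarith) hz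
    rw [show q - 2 - 1 = q - 3 by ring] at this
    simp only [fwdDiff] at this ⊢
    nlinarith
  have hΔ₂ : ∀ y ∈ Ioi (0 : ℝ),
      c * (q - 2) * (y + 1) ^ (q - 3) ≤ Δ_[1] ^[2] (fun y ↦ q * y ^ (q - 1)) y := by
    intro y hy
    have := hmid (y + 1 / 2) (by simp only [mem_Ioi] at hy ⊢; linarith)
    rw [show y + 1 / 2 + 1 / 2 = y + 1 by ring] at this
    exact this.trans <| fwdDiff_le_fwdDiff_iter_succ_of_deriv (n := 1) h₁
      (fun z hz ↦ h₂ z (by simp only [mem_Ici, mem_Ioi] at hz ⊢; linarith)) hmid (le_of_lt hy)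
  have := hmid (x + 1) (by simp only [mem_Ioi]; linarith)
  rw [show x + 1 + 1 / 2 = x + 3 / 2 by ring] at this
  exact this.trans <| fwdDiff_le_fwdDiff_iter_succ_of_deriv (n := 2) h₀
    (fun z hz ↦ h₂ z (by simp only [mem_Ici, mem_Ioi] at hz ⊢; linarith)) hΔ₂ hx

theorem fwdDiff_iter_three_rpow_pos (hq₂ : 2 < q) (hq₃ : q ≤ 3) {x : ℝ} (hx : 0 ≤ x) :
    0 < Δ_[1] ^[3] (fun y ↦ y ^ q) x := by
  refine lt_of_lt_of_le ?_ (mul_rpow_le_fwdDiff_iter_three_rpow hq₂ hq₃ hx)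
  have : 0 < q - 2 := by linarith
  have : 0 < q - 1 := by linarith
  positivity

theorem mul_rpow_lt_fwdDiff_iter_three_rpow_add (hq₂ : 2 < q) (hq₃ : q < 3) {x y : ℝ}
    (hx : 0 ≤ x) (hy : 0 ≤ y) :
    2 * (q * (q - 1) * (q - 2)) * ((x + y + 4) / 2) ^ (q - 3) <
      Δ_[1] ^[3] (fun y ↦ y ^ q) x + Δ_[1] ^[3] (fun y ↦ y ^ q) y := by
  have hc : 0 < q * (q - 1) * (q - 2) := mul_pos (mul_pos (by linarith) (by linarith)) (by linarith)
  have hconv := (convexOn_rpow_of_nonpos (p := q - 3) (by linarith)).2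
    (mem_Ioi.2 (by linarith : (0 : ℝ) < x + 3 / 2)) (mem_Ioi.2 (by linarith : (0 : ℝ) < y + 3 / 2))
    (by norm_num : (0 : ℝ) ≤ 1 / 2) (by norm_num : (0 : ℝ) ≤ 1 / 2) (by norm_num)
  simp only [smul_eq_mul] at hconv
  rw [show 1 / 2 * (x + 3 / 2) + 1 / 2 * (y + 3 / 2) = (x + y + 3) / 2 by ring] at hconv
  have hlt : ((x + y + 4) / 2) ^ (q - 3) < ((x + y + 3) / 2) ^ (q - 3) :=
    rpow_lt_rpow_of_neg (by linarith) (by linarith) (by linarith)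
  have := mul_rpow_le_fwdDiff_iter_three_rpow hq₂ hq₃.le hx
  have := mul_rpow_le_fwdDiff_iter_three_rpow hq₂ hq₃.le hy
  nlinarith

theorem fwdDiff_iter_three_rpow_zero (hq : q ≠ 0) :
    Δ_[1] ^[3] (fun y : ℝ ↦ y ^ q) 0 = 3 ^ q - 3 * 2 ^ q + 3 := by
  simp only [Function.iterate_succ_apply', Function.iterate_zero_apply, fwdDiff, zero_add,
    zero_rpow hq, one_rpow]
  norm_num
  ring

end RpowDifferences

section ToeplitzRow

variable {s : ℝ}

theorem tFn_add_two (i : ℕ) : tFn s (i + 2) = Δ_[1] ^[4] (fun y : ℝ ↦ y ^ (3 - 2 * s)) i := by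
  have hi : (0 : ℝ) ≤ i := Nat.cast_nonneg i
  simp only [Function.iterate_succ_apply', Function.iterate_zero_apply, fwdDiff, tFn]
  push_cast
  rw [add_sub_cancel_right, abs_of_nonneg hi, show (i : ℝ) + 2 - 1 = i + 1 by ring,
    abs_of_nonneg (by linarith)]
  ring_nf

theorem tFn_one (hs : 3 - 2 * s ≠ 0) : tFn s 1 = t1 s := by
  norm_num [tFn, t1, zero_rpow hs]
  rw [show (5 : ℝ) - 2 * s = 2 + (3 - 2 * s) by ring, rpow_add two_pos]
  ring

theorem tFn_zero (hs : 3 - 2 * s ≠ 0) :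
    tFn s 0 = 2 * Δ_[1] ^[3] (fun y : ℝ ↦ y ^ (3 - 2 * s)) 0 - 2 * t1 s := by
  rw [fwdDiff_iter_three_rpow_zero hs, ← tFn_one hs]
  norm_num [tFn, zero_rpow hs]
  ring

theorem three_mul_t1_lt (hs : s ∈ Ioo (0 : ℝ) (1 / 2)) :
    3 * t1 s < Δ_[1] ^[3] (fun y : ℝ ↦ y ^ (3 - 2 * s)) 0 := by
  obtain ⟨hs₀, hs₁⟩ := hs
  -- factoring out powers of `2` and `3`, the claim is `1 + 3 ^ (1 - 2s) < 2 * 2 ^ (1 - 2s)`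
  have hconc := (strictConcaveOn_rpow (p := 1 - 2 * s) (by linarith) (by linarith)).2
    (mem_Ici.2 zero_le_one) (mem_Ici.2 (by norm_num : (0 : ℝ) ≤ 3)) (by norm_num)
    (by norm_num : (0 : ℝ) < 1 / 2) (by norm_num : (0 : ℝ) < 1 / 2) (by norm_num)
  simp only [smul_eq_mul, Real.one_rpow] at hconc
  rw [show (1 : ℝ) / 2 * 1 + 1 / 2 * 3 = 2 by norm_num] at hconc
  rw [fwdDiff_iter_three_rpow_zero (by linarith), t1,
    show (5 : ℝ) - 2 * s = 4 + (1 - 2 * s) by ring, show (3 : ℝ) - 2 * s = 2 + (1 - 2 * s) by ring, rpow_add (by norm_num : (0 : ℝ) < 3),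
    rpow_add two_pos, rpow_add two_pos]
  norm_num
  linarith

theorem sum_range_succ_abs_tFn (hs : s ∈ Ioo (0 : ℝ) (1 / 2)) (ht1 : 0 ≤ t1 s) (m : ℕ) :
    ∑ i ∈ Finset.range (m + 1), |tFn s (i + 1)| = t1 s + Δ_[1] ^[3] (fun y : ℝ ↦ y ^ (3 - 2 * s)) 0
      - Δ_[1] ^[3] (fun y : ℝ ↦ y ^ (3 - 2 * s)) m := by
  obtain ⟨hs₀, hs₁⟩ := hs
  set D := Δ_[1] ^[3] (fun y : ℝ ↦ y ^ (3 - 2 * s))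
  have hstep : ∀ i : ℕ, |tFn s (i + 1 + 1)| = D i - D ((i + 1 : ℕ) : ℝ) := fun i ↦ by
    rw [tFn_add_two, abs_of_nonpos (fwdDiff_iter_four_rpow_nonpos (by linarith) (by linarith)
      (Nat.cast_nonneg i)), Function.iterate_succ_apply', fwdDiff, Nat.cast_succ, neg_sub]
  rw [Finset.sum_range_succ', Finset.sum_congr rfl fun i _ ↦ hstep i,
    Finset.sum_range_sub' (fun i : ℕ ↦ D i), zero_add, tFn_one (by linarith), abs_of_nonneg ht1,
    Nat.cast_zero]
  ring

theorem sum_abs_tFn_add_sum_abs_tFn_lt (hs : s ∈ Ioo (0 : ℝ) (1 / 2)) (ht1 : 0 < t1 s) (a b : ℕ)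
    (hbound : t1 s ≤
      (1 - 2 * s) * (1 - s) * (3 - 2 * s) * (((a + b + 2 : ℕ) : ℝ) / 2) ^ (-(2 * s))) :
    ∑ i ∈ Finset.range a, |tFn s (i + 1)| + ∑ i ∈ Finset.range b, |tFn s (i + 1)| < tFn s 0 := by
  have hsum := sum_range_succ_abs_tFn hs ht1.le
  have hD₀ := three_mul_t1_lt hs
  obtain ⟨hs₀, hs₁⟩ := hs
  set D := Δ_[1] ^[3] (fun y : ℝ ↦ y ^ (3 - 2 * s))
  have hDpos : ∀ m : ℕ, 0 < D m := fun m ↦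
    fwdDiff_iter_three_rpow_pos (by linarith) (by linarith) (Nat.cast_nonneg m)
  rw [tFn_zero (by linarith)]
  rcases a with _ | a <;> rcases b with _ | b
  · simp only [Finset.range_zero, Finset.sum_empty]
    linarith
  · rw [Finset.sum_range_zero, hsum]
    linarith [hDpos b]
  · rw [Finset.sum_range_zero, hsum]
    linarith [hDpos a]
  · rw [hsum, hsum]
    have hpair := mul_rpow_lt_fwdDiff_iter_three_rpow_add (q := 3 - 2 * s) (by linarith)
      (by linarith) (Nat.cast_nonneg a) (Nat.cast_nonneg b)
    rw [show (3 : ℝ) - 2 * s - 3 = -(2 * s) by ring] at hpair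
    push_cast at hbound
    rw [show ((a : ℝ) + 1 + (b + 1) + 2) / 2 = (a + b + 4) / 2 by ring] at hbound
    linarith

end ToeplitzRow

theorem sum_filter_ne_natAbs_sub {M : Type*} [AddCommMonoid M] {n : ℕ} (g : ℕ → M) (k : Fin n) :
    ∑ j ∈ Finset.univ.filter (fun j ↦ j ≠ k), g (((k : ℕ) : ℤ) - ((j : ℕ) : ℤ)).natAbs =
      ∑ i ∈ Finset.range k, g (i + 1) + ∑ i ∈ Finset.range (n - 1 - k), g (i + 1) := by
  obtain ⟨k, hk⟩ := k
  simp_rw [Finset.sum_filter, ← Fin.val_ne_iff]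
  rw [Fin.sum_univ_eq_sum_range (fun j ↦ if j ≠ k then g ((k : ℤ) - j).natAbs else 0),
    ← Finset.sum_range_add_sum_Ico _ hk.le, Finset.sum_eq_sum_Ico_succ_bot hk,
    Finset.sum_Ico_eq_sum_range, if_neg (not_not.2 rfl), zero_add, ← Finset.sum_range_reflect,
    show n - (k + 1) = n - 1 - k by omega]
  congr 1 <;> refine Finset.sum_congr rfl fun i hi ↦ ?_ <;> rw [Finset.mem_range] at hi
  · rw [if_pos (by omega)]
    congr 1
    omega
  · rw [if_pos (by omega)]
    congr 1
    omega

theorem le_mul_rpow_neg_of_le_rpow_one_div {t γ e x : ℝ} (ht : 0 < t) (hγ : 0 ≤ γ) (he : 0 < e)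
    (hx : 0 < x) (h : x ≤ (γ / t) ^ (1 / e)) : t ≤ γ * x ^ (-e) := by
  rw [one_div, le_rpow_inv_iff_of_pos hx.le (div_nonneg hγ ht.le) he, le_div_iff₀ ht] at h
  rw [rpow_neg hx.le, ← div_eq_mul_inv, le_div_iff₀ (rpow_pos_of_pos hx e), mul_comm]
  exact h

theorem Acoef_pos {s : ℝ} (hs : s ∈ Ioo (-(1 / 2) : ℝ) (1 / 2)) : 0 < Acoef s := by
  obtain ⟨hs₀, hs₁⟩ := hs
  have hcos : 0 < cos (s * π) := cos_pos_of_mem_Ioo ⟨by nlinarith [pi_pos], by nlinarith [pi_pos]⟩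
  have hΓ : 0 < Gamma (4 - 2 * s) := Gamma_pos_of_pos (by linarith)
  unfold Acoef
  positivity

theorem stmt15 (s : ℝ) (hs : s ∈ Set.Ioo (0 : ℝ) (1 / 2)) (ht1 : 0 < t1 s)
    (h : ℝ) (hh : 0 < h) (N : ℕ) (hN : 2 ≤ N)
    (hNle : (N : ℝ) ≤ 2 * (((1 - 2 * s) * (1 - s) * (3 - 2 * s)) / t1 s) ^ (1 / (2 * s)))
    (S : Matrix (Fin (N - 1)) (Fin (N - 1)) ℝ)
    (hS : ∀ k j, S k j =
      Acoef s * h ^ (1 - 2 * s) * tFn s (((k : ℕ) : ℤ) - ((j : ℕ) : ℤ)).natAbs) :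
    ∀ k, ∑ j ∈ Finset.univ.filter (fun j => j ≠ k), |S k j| < S k k := by
  intro k
  obtain ⟨hs₀, hs₁⟩ := hs
  have hC : 0 < Acoef s * h ^ (1 - 2 * s) :=
    mul_pos (Acoef_pos ⟨by linarith, hs₁⟩) (rpow_pos_of_pos hh _)
  have hbound : t1 s ≤ (1 - 2 * s) * (1 - s) * (3 - 2 * s) * ((N : ℝ) / 2) ^ (-(2 * s)) :=
    le_mul_rpow_neg_of_le_rpow_one_div ht1
      (mul_nonneg (mul_nonneg (by linarith) (by linarith)) (by linarith)) (by linarith)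
      (div_pos (Nat.cast_pos.2 (by omega)) two_pos) (by linarith)
  have hrow := sum_abs_tFn_add_sum_abs_tFn_lt ⟨hs₀, hs₁⟩ ht1 k (N - 1 - 1 - k)
    (by rwa [show (k : ℕ) + (N - 1 - 1 - k) + 2 = N by omega])
  have hentry : ∀ j, |S k j| =
      Acoef s * h ^ (1 - 2 * s) * |tFn s (((k : ℕ) : ℤ) - ((j : ℕ) : ℤ)).natAbs| := fun j ↦ by
    rw [hS, abs_mul, abs_of_pos hC]
  rw [Finset.sum_congr rfl fun j _ ↦ hentry j, ← Finset.mul_sum,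
    sum_filter_ne_natAbs_sub (fun p ↦ |tFn s p|) k, hS, sub_self, Int.natAbs_zero]
  exact mul_lt_mul_of_pos_left hrow hC
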